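/- arXiv:2311.10335 — 2 statements merged into one kernel-verified Lean document; each statement's English description precedes it below -/
import Mathlib

section
/- Let $r \geq 3$ and let $G_1$ be the pan graph on vertices $u_0, u_1, \dots, u_r$ whose edges are the pendant edge $u_0u_r$ together with the cycle edges $u_1u_2$, $u_iu_{i+2}$ for $1 \leq i \leq r-2$, and $u_{r-1}u_r$. Let $H_0, H_1, \dots, H_r$ be connected graphs, each on at least two vertices, with $|V(H_i)| \leq |V(H_{i+1})|$ for all $0 \leq i \leq r-1$. Form the generalized edge corona $G_1 \diamond (H_0, H_1, \dots, H_r)$ by joining both endpoints of the edge $u_0u_r$ to every vertex of $H_0$, both endpoints of $u_1u_2$ to every vertex of $H_1$, both endpoints of $u_iu_{i+2}$ to every vertex of $H_{i+1}$ for $1 \leq i \leq r-2$, and both endpoints of $u_{r-1}u_r$ to every vertex of $H_r$. Suppose that: (a) $\Delta(H_0) < \delta(H_1)$; (b) $\Delta(H_i) \leq \delta(H_{i+1})$ for all $1 \leq i \leq r-1$; (c) the degree of $u_0$ in the corona graph is at most the minimum over vertices $v$ of $H_i$ of the degree of $v$ in the corona graph, for every $0 \leq i \leq r$; and (d) the maximum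 degree in the corona graph over vertices of $H_r$ is at most the degree of $u_1$ in the corona graph. Then $G_1 \diamond (H_0, H_1, \dots, H_r)$ is antimagic. -/
/-- The degree of a vertex `v` in a graph `G`. -/
noncomputable def vdeg {V : Type*} (G : SimpleGraph V) (v : V) : ℕ :=
  Nat.card (G.neighborSet v)

open Classical in
/-- A finite graph is antimagic if its edges can be labeled bijectively with
`1, 2, ..., |E|` so that the vertex sums (sums of labels of incident edges)
are pairwise distinct. -/
def IsAntimagic {V : Type*} [Fintype V] (G : SimpleGraph V) : Prop :=
  ∃ f : Sym2 V → ℕ,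
    Set.BijOn f G.edgeSet (Set.Icc 1 (Nat.card G.edgeSet)) ∧
    Function.Injective (fun v : V => ∑ u : V, if G.Adj v u then f s(v, u) else 0)

/-- The generalized edge corona of `G` (with edges indexed by `ι`, the `i`-th edge
having endpoints `ends i`) and the family `H i`: take the disjoint union of `G` and
all the `H i`, and join both endpoints of the `i`-th edge of `G` to every vertex of `H i`. -/
def genEdgeCorona {A ι : Type*} {B : ι → Type*}
    (G : SimpleGraph A) (ends : ι → A × A) (H : ∀ i, SimpleGraph (B i)) :
    SimpleGraph (A ⊕ (Σ i, B i)) :=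
  SimpleGraph.fromRel (fun x y =>
    match x, y with
    | Sum.inl a, Sum.inl b => G.Adj a b
    | Sum.inl a, Sum.inr ⟨i, _⟩ => a = (ends i).1 ∨ a = (ends i).2
    | Sum.inr _, Sum.inl _ => False
    | Sum.inr ⟨i, u⟩, Sum.inr ⟨j, v⟩ => ∃ h : i = j, (H j).Adj (h ▸ u) v)

/-- Vertices of the spider with three legs, each a path on `p` vertices:
`none` is the center `v₀` and `some (l, k)` is the `(k+1)`-st vertex of leg `l`. -/
abbrev SpiderV (p : ℕ) := Option (Fin 3 × Fin p)

/-- Endpoints of the edges of the spider, indexed by `n : Fin (3p)`; the edge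
indexed by `n = 3k + l` joins positions `p-k` and `p-k-1` of leg `l` when `k ≤ p-2`,
and joins the center to the first vertex of leg `l` when `k = p-1`.
(So `H (n)` plays the role of `H_{n+1} = H_{3k+l+1}` of the paper.) -/
def spiderEnds (p : ℕ) (hp : 1 ≤ p) (n : Fin (3 * p)) : SpiderV p × SpiderV p :=
  if (n : ℕ) / 3 + 1 = p then
    (none, some (⟨(n : ℕ) % 3, by omega⟩, ⟨0, by omega⟩))
  else
    (some (⟨(n : ℕ) % 3, by omega⟩, ⟨p - (n : ℕ) / 3 - 1, by omega⟩),
     some (⟨(n : ℕ) % 3, by omega⟩, ⟨p - (n : ℕ) / 3 - 2, by omega⟩))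

/-- The spider graph with center `v₀` of degree `3` and three legs, each a path on
`p` vertices. -/
def spiderGraph (p : ℕ) (hp : 1 ≤ p) : SimpleGraph (SpiderV p) :=
  SimpleGraph.fromRel (fun a b =>
    ∃ n : Fin (3 * p), a = (spiderEnds p hp n).1 ∧ b = (spiderEnds p hp n).2)

/-- The generalized edge corona of the spider graph and the family `H`. -/
def spiderCorona (p : ℕ) (hp : 1 ≤ p) {B : Fin (3 * p) → Type*}
    (H : ∀ n, SimpleGraph (B n)) : SimpleGraph (SpiderV p ⊕ Σ n, B n) :=
  genEdgeCorona (spiderGraph p hp) (spiderEnds p hp) H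

/-- Endpoints of the edges of the pan graph `G₁` on vertices `u₀, u₁, ..., u_r`
(so `V = Fin (r+1)`), indexed so that the graph `Hᵢ` is joined to the edge `panEnds r hr i`:
`H₀` to the pendant edge `u₀u_r`, `H₁` to `u₁u₂`, `H_{i+1}` to the cycle edge `u_i u_{i+2}`
for `1 ≤ i ≤ r-2` (i.e. index `j` with `2 ≤ j ≤ r-1` gives edge `u_{j-1}u_{j+1}`),
and `H_r` to `u_{r-1}u_r`. -/
def panEnds (r : ℕ) (hr : 3 ≤ r) (i : Fin (r + 1)) : Fin (r + 1) × Fin (r + 1) :=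
  if (i : ℕ) = 0 then (⟨0, by omega⟩, ⟨r, by omega⟩)
  else if (i : ℕ) = 1 then (⟨1, by omega⟩, ⟨2, by omega⟩)
  else if h : (i : ℕ) = r then (⟨r - 1, by omega⟩, ⟨r, by omega⟩)
  else (⟨(i : ℕ) - 1, by omega⟩, ⟨(i : ℕ) + 1, by have := i.isLt; omega⟩)

/-- The pan graph on `u₀, u₁, ..., u_r`: the pendant edge `u₀u_r` together with the
cycle edges `u₁u₂`, `u_i u_{i+2}` for `1 ≤ i ≤ r-2`, and `u_{r-1}u_r`. -/
def panGraph (r : ℕ) (hr : 3 ≤ r) : SimpleGraph (Fin (r + 1)) :=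
  SimpleGraph.fromRel (fun a b =>
    ∃ i : Fin (r + 1), a = (panEnds r hr i).1 ∧ b = (panEnds r hr i).2)

/-- The generalized edge corona `G₁ ⋄ (H₀, H₁, ..., H_r)` of the pan graph and the
family `H`, joining both endpoints of the `i`-th edge (with endpoints `panEnds r hr i`)
to every vertex of `H i`. -/
def panCorona (r : ℕ) (hr : 3 ≤ r) {B : Fin (r + 1) → Type*}
    (H : ∀ i, SimpleGraph (B i)) : SimpleGraph (Fin (r + 1) ⊕ Σ i, B i) :=
  genEdgeCorona (panGraph r hr) (panEnds r hr) H


/-!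
Label the edges of the `H i` first (`1, …, M`, block after block), then the edges of the pan
(`M + 1, …, M + r + 1`), and finally the join edges: the two join edges of an `H`-vertex get the
consecutive labels `A + 2ρ + 1` and `A + 2ρ + 2`, where `ρ` is its rank among all `H`-vertices,
ordered block after block and, inside each `H i`, by the sum of its `H i`-labels. As degrees are
positive and weakly increase from each `H i` to the next, these sums of `H`-labels increase with
`ρ`, so the vertex sums of the `H`-vertices increase with `ρ` in steps of at least `4`.

Which of its two labels a vertex of `H i` sends to which endpoint of the `i`-th pan edge is free:
if exactly `d i` of them send the larger one to the first endpoint, the two endpoints receive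
`L i + d i` and `L i + (n i - d i)` in total from `H i`. Because the `H i` grow in size, the pan
vertex sums increase along `u₀, u₁, …, u_r` whatever the `d i` are, and the `d i` can be chosen
one after another so that no pan vertex sum falls into the `4`-separated set of `H`-vertex sums.
-/

open Finset Function

section Avoidance

theorem exists_le_add_notMem_of_pairwise {T : Set ℕ}
    (hT : T.Pairwise fun x y => x + 4 ≤ y ∨ y + 4 ≤ x) {n : ℕ} (hn : 2 ≤ n) (c₁ c₂ : ℕ) :
    ∃ d ≤ n, c₁ + d ∉ T ∧ c₂ + (n - d) ∉ T := by
  by_contra! h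
  have hclose : ∀ x ∈ T, ∀ y ∈ T, x < y → y ≤ x + 2 → False := fun x hx y hy hxy hyx => by
    have := hT hx hy hxy.ne; omega
  -- Among `d = 0, 1, 2`, each of the two conditions fails at most once.
  have h0 := h 0 (by omega); have h1 := h 1 (by omega); have h2 := h 2 (by omega)
  by_cases a0 : c₁ + 0 ∈ T <;> by_cases a1 : c₁ + 1 ∈ T <;> by_cases a2 : c₁ + 2 ∈ T <;>
    simp only [a0, a1, a2, not_false_eq_true, forall_const] at h0 h1 h2 <;>
    first
    | exact hclose _ a0 _ a1 (by omega) (by omega)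
    | exact hclose _ a0 _ a2 (by omega) (by omega)
    | exact hclose _ a1 _ a2 (by omega) (by omega)
    | exact hclose _ h1 _ h0 (by omega) (by omega)
    | exact hclose _ h2 _ h0 (by omega) (by omega)
    | exact hclose _ h2 _ h1 (by omega) (by omega)

theorem exists_seq_of_two_step {p : ℕ → ℕ → ℕ → Prop} (h : ∀ k a, ∃ b, p k a b) (s₀ s₁ : ℕ) :
    ∃ s : ℕ → ℕ, s 0 = s₀ ∧ s 1 = s₁ ∧ ∀ k, p k (s k) (s (k + 2)) := by
  choose f hf using h
  let t : ℕ → ℕ × ℕ := fun k => Nat.rec (s₀, s₁) (fun k q => (q.2, f k q.1)) k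
  exact ⟨fun k => (t k).1, rfl, rfl, fun k => hf k _⟩

end Avoidance

section IntervalLabels

theorem bijOn_add_equivFin {α : Type*} {n : ℕ} (e : α ≃ Fin n) (c : ℕ) :
    Set.BijOn (fun x => c + (e x + 1)) Set.univ (Set.Ioc c (c + n)) := by
  refine ⟨fun x _ => ?_, fun x _ y _ hxy => e.injective (Fin.ext (by simpa using hxy)), ?_⟩
  · have := (e x).isLt
    simp only [Set.mem_Ioc]
    omega
  · rintro m ⟨hcm, hmn⟩
    refine ⟨e.symm ⟨m - c - 1, by omega⟩, Set.mem_univ _, ?_⟩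
    simp only [Equiv.apply_symm_apply]
    omega

theorem bijOn_pairLabel {α : Type*} {n : ℕ} (e : α ≃ Fin n) (ε : α → Bool) (c : ℕ) :
    Set.BijOn (fun x : α × Bool => c + (2 * e x.1 + 1 + (xor x.2 (ε x.1)).toNat)) Set.univ
      (Set.Ioc c (c + 2 * n)) := by
  refine ⟨fun x _ => ?_, fun x _ y _ hxy => ?_, ?_⟩
  · have := (e x.1).isLt
    have := Bool.toNat_le (xor x.2 (ε x.1))
    simp only [Set.mem_Ioc]
    omega
  · have := Bool.toNat_le (xor x.2 (ε x.1))
    have := Bool.toNat_le (xor y.2 (ε y.1))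
    simp only at hxy
    have h1 : x.1 = y.1 := e.injective (Fin.ext (by omega))
    have h2 : (xor x.2 (ε x.1)).toNat = (xor y.2 (ε y.1)).toNat := by omega
    refine Prod.ext h1 ?_
    rw [h1] at h2
    revert h2
    cases x.2 <;> cases y.2 <;> cases ε y.1 <;> simp
  · rintro m ⟨hcm, hmn⟩
    set a := e.symm ⟨(m - c - 1) / 2, by omega⟩
    refine ⟨(a, xor (decide ((m - c - 1) % 2 = 1)) (ε a)), Set.mem_univ _, ?_⟩
    simp only [Bool.xor_assoc, Bool.xor_self, Bool.xor_false, a, Equiv.apply_symm_apply]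
    by_cases hm : (m - c - 1) % 2 = 1 <;>
      simp only [hm, decide_true, decide_false, Bool.toNat_true, Bool.toNat_false, add_zero] <;>
      omega

theorem sum_pairLabel (n c d : ℕ) (b : Bool) :
    ∑ j : Fin n, (c + (2 * j + 1 + (xor b (decide (j < d))).toNat)) =
      n * c + n * n + if b then n - min d n else min d n := by
  rw [Fin.sum_univ_eq_sum_range (fun j => c + (2 * j + 1 + (xor b (decide (j < d))).toNat))]
  induction n with
  | zero => simp
  | succ n ih =>
    rw [sum_range_succ, ih]
    cases b <;> by_cases h : n < d <;> simp [h, add_mul, mul_add] <;> omega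

theorem Set.BijOn.sumElim_Ioc {α β : Type*} {f : α → ℕ} {g : β → ℕ} {a b c : ℕ} (hab : a ≤ b)
    (hbc : b ≤ c) (hf : Set.BijOn f Set.univ (Set.Ioc a b))
    (hg : Set.BijOn g Set.univ (Set.Ioc b c)) :
    Set.BijOn (Sum.elim f g) Set.univ (Set.Ioc a c) := by
  have hf' := fun x => hf.mapsTo (Set.mem_univ x)
  have hg' := fun x => hg.mapsTo (Set.mem_univ x)
  simp only [Set.mem_Ioc] at hf' hg'
  refine ⟨?_, ?_, ?_⟩
  · rintro (x | x) - <;> simp only [Set.mem_Ioc, Sum.elim_inl, Sum.elim_inr]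
    · have := hf' x; omega
    · have := hg' x; omega
  · rintro (x | x) - (y | y) - hxy <;> simp only [Sum.elim_inl, Sum.elim_inr] at hxy
    · rw [hf.injOn (Set.mem_univ x) (Set.mem_univ y) hxy]
    · have := hf' x; have := hg' y; omega
    · have := hg' x; have := hf' y; omega
    · rw [hg.injOn (Set.mem_univ x) (Set.mem_univ y) hxy]
  · rintro m ⟨ham, hmc⟩
    by_cases hmb : m ≤ b
    · obtain ⟨x, -, rfl⟩ := hf.surjOn ⟨ham, hmb⟩
      exact ⟨.inl x, Set.mem_univ _, rfl⟩
    · obtain ⟨x, -, rfl⟩ := hg.surjOn ⟨by omega, hmc⟩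
      exact ⟨.inr x, Set.mem_univ _, rfl⟩

end IntervalLabels

section FinSums

theorem Fin.sum_castLE_eq_sum_range_extend {n : ℕ} (f : Fin n → ℕ) (i : Fin n) :
    ∑ j : Fin i, f (Fin.castLE i.2.le j) = ∑ j ∈ range i, extend Fin.val f 0 j := by
  rw [← Fin.sum_univ_eq_sum_range]
  exact sum_congr rfl fun j _ => (Fin.val_injective.extend_apply f 0 (Fin.castLE i.2.le j)).symm

theorem Fin.sum_ite_eq_sum_of_iff {n : ℕ} (p : Fin n → Prop) [DecidablePred p] (S : Finset ℕ)
    (hS : ∀ k : Fin n, p k ↔ (k : ℕ) ∈ S) (hSn : ∀ k ∈ S, k < n) (F : ℕ → ℕ) :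
    ∑ k : Fin n, (if p k then F k else 0) = ∑ k ∈ S, F k := by
  calc ∑ k : Fin n, (if p k then F k else 0)
      = ∑ k : Fin n, (if (k : ℕ) ∈ S then F k else 0) := sum_congr rfl fun k _ => by simp [hS]
    _ = ∑ k ∈ range n, if k ∈ S then F k else 0 :=
      Fin.sum_univ_eq_sum_range (fun k => if k ∈ S then F k else 0) n
    _ = ∑ k ∈ S, F k := by
      rw [← sum_filter]
      congr 1
      ext k
      simpa using hSn k

theorem Fin.le_of_lt_of_forall_succ {n : ℕ} {β : Fin n → Type*} [∀ i, Nonempty (β i)]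
    (f : ∀ i, β i → ℕ) (hstep : ∀ i j : Fin n, (i : ℕ) + 1 = j → ∀ u v, f i u ≤ f j v)
    {i j : Fin n} (hij : i < j) (u : β i) (v : β j) : f i u ≤ f j v := by
  suffices ∀ k (hk : k < n), (i : ℕ) < k → ∀ v : β ⟨k, hk⟩, f i u ≤ f ⟨k, hk⟩ v from
    this j j.2 hij v
  intro k
  induction k with
  | zero => intro _ h; omega
  | succ k ih =>
    intro hk hik v
    by_cases hik' : (i : ℕ) = k
    · exact hstep i ⟨k + 1, hk⟩ (by simp [hik']) u v
    · obtain ⟨w⟩ := ‹∀ i, Nonempty (β i)› ⟨k, by omega⟩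
      exact (ih (by omega) (by omega) w).trans (hstep _ _ rfl w v)

noncomputable def sortEquiv {β : Type*} [Fintype β] (f : β → ℕ) : β ≃ Fin (Fintype.card β) :=
  ((Tuple.sort (f ∘ (Fintype.equivFin β).symm)).trans (Fintype.equivFin β).symm).symm

theorem le_of_sortEquiv_le {β : Type*} [Fintype β] (f : β → ℕ) {x y : β}
    (h : sortEquiv f x ≤ sortEquiv f y) : f x ≤ f y := by
  simpa [sortEquiv] using Tuple.monotone_sort (f ∘ (Fintype.equivFin β).symm) h

end FinSums

section Graphs

theorem vdeg_eq_degree {V : Type*} (G : SimpleGraph V) (v : V) [Fintype (G.neighborSet v)] :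
    vdeg G v = G.degree v := by
  rw [vdeg, Nat.card_eq_fintype_card, G.card_neighborSet_eq_degree]

open scoped Classical in
theorem SimpleGraph.card_filter_mem_edgeSet {V : Type*} [Fintype V] (G : SimpleGraph V) (v : V) :
    #{e : G.edgeSet | v ∈ e.1} = G.degree v := by
  rw [← G.card_incidenceFinset_eq_degree, ← card_map (Embedding.subtype _)]
  congr 1
  ext e
  simp [SimpleGraph.incidenceSet, and_comm]

theorem edgeSet_fromRel_ends {A ι : Type*} (ends : ι → A × A)
    (hne : ∀ k, (ends k).1 ≠ (ends k).2) :
    (SimpleGraph.fromRel fun a b => ∃ k, a = (ends k).1 ∧ b = (ends k).2).edgeSet =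
      Set.range fun k => s((ends k).1, (ends k).2) := by
  ext e
  induction e using Sym2.ind with | _ a b => ?_
  simp only [SimpleGraph.mem_edgeSet, SimpleGraph.fromRel_adj, Set.mem_range, Sym2.eq_iff]
  constructor
  · rintro ⟨-, ⟨k, rfl, rfl⟩ | ⟨k, rfl, rfl⟩⟩
    exacts [⟨k, .inl ⟨rfl, rfl⟩⟩, ⟨k, .inr ⟨rfl, rfl⟩⟩]
  · rintro ⟨k, ⟨rfl, rfl⟩ | ⟨rfl, rfl⟩⟩
    exacts [⟨hne k, .inl ⟨k, rfl, rfl⟩⟩, ⟨(hne k).symm, .inr ⟨k, rfl, rfl⟩⟩]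

theorem sum_adj_extend_eq_sum_mem {V α : Type*} [Fintype V] [DecidableEq V] [Fintype α]
    {G : SimpleGraph V} [DecidableRel G.Adj] {φ : α → Sym2 V} (hφ : Injective φ)
    (hrange : Set.range φ = G.edgeSet) (lab : α → ℕ) (v : V) :
    ∑ u, (if G.Adj v u then extend φ lab 0 s(v, u) else 0) = ∑ c with v ∈ φ c, lab c := by
  have himage : ({u | G.Adj v u} : Finset V).image (fun u => s(v, u)) =
      ({c | v ∈ φ c} : Finset α).image φ := by
    ext e
    simp only [mem_image, mem_filter, mem_univ, true_and]
    constructor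
    · rintro ⟨u, hu, rfl⟩
      obtain ⟨c, hc⟩ : s(v, u) ∈ Set.range φ := hrange ▸ hu
      exact ⟨c, hc ▸ Sym2.mem_mk_left v u, hc⟩
    · rintro ⟨c, hvc, rfl⟩
      obtain ⟨u, hu⟩ := Sym2.mem_iff_exists.mp hvc
      have hedge : φ c ∈ G.edgeSet := hrange ▸ Set.mem_range_self c
      exact ⟨u, by rwa [hu, SimpleGraph.mem_edgeSet] at hedge, hu.symm⟩
  rw [← sum_filter, ← sum_image fun u _ w _ h => Sym2.congr_right.mp h, himage,
    sum_image fun x _ y _ h => hφ h]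
  exact sum_congr rfl fun c _ => hφ.extend_apply lab 0 c

theorem isAntimagic_of_edgeEnum {V α : Type*} [Fintype V] [DecidableEq V] [Fintype α]
    {G : SimpleGraph V} {φ : α → Sym2 V} (hφ : Injective φ) (hrange : Set.range φ = G.edgeSet)
    {lab : α → ℕ} {q : ℕ} (hlab : Set.BijOn lab Set.univ (Set.Ioc 0 q))
    (hsum : Injective fun v => ∑ c with v ∈ φ c, lab c) : IsAntimagic G := by
  have hcomp : extend φ lab 0 ∘ φ = lab := funext (hφ.extend_apply lab 0)
  have hcard : Nat.card G.edgeSet = q := by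
    rw [← hrange, Nat.card_range_of_injective hφ, ← Nat.card_univ,
      Nat.card_congr hlab.equiv, Nat.card_coe_set_eq, Set.ncard_Ioc_nat, Nat.sub_zero]
  refine ⟨extend φ lab 0, ?_, ?_⟩
  · rw [hcard, ← zero_add 1, Set.Icc_add_one_left_eq_Ioc, ← hrange, ← Set.image_univ,
      ← Set.bijOn_comp_iff hφ.injOn, hcomp]
    exact hlab
  · classical
    convert hsum using 2 with v
    exact sum_adj_extend_eq_sum_mem hφ hrange lab v

end Graphs

section GenEdgeCorona

variable {A ι : Type*} {B : ι → Type*} (G : SimpleGraph A) (ends : ι → A × A)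
  (H : ∀ i, SimpleGraph (B i))

theorem genEdgeCorona_adj_inl_inl {a b : A} :
    (genEdgeCorona G ends H).Adj (.inl a) (.inl b) ↔ G.Adj a b := by
  simp only [genEdgeCorona, SimpleGraph.fromRel_adj, ne_eq, Sum.inl.injEq]
  exact ⟨fun h => h.2.elim id fun h' => h'.symm, fun h => ⟨G.ne_of_adj h, .inl h⟩⟩

theorem genEdgeCorona_adj_inl_inr {a : A} {i : ι} {v : B i} :
    (genEdgeCorona G ends H).Adj (.inl a) (.inr ⟨i, v⟩) ↔ a = (ends i).1 ∨ a = (ends i).2 := by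
  simp [genEdgeCorona]

theorem genEdgeCorona_adj_inr_inr {i j : ι} {v : B i} {w : B j} :
    (genEdgeCorona G ends H).Adj (.inr ⟨i, v⟩) (.inr ⟨j, w⟩) ↔
      ∃ h : i = j, (H j).Adj (h ▸ v) w := by
  simp only [genEdgeCorona, SimpleGraph.fromRel_adj, ne_eq]
  constructor
  · rintro ⟨-, h | ⟨rfl, h⟩⟩
    · exact h
    · exact ⟨rfl, h.symm⟩
  · rintro ⟨rfl, h⟩
    exact ⟨fun he => (H i).ne_of_adj h (by simpa using he), .inl ⟨rfl, h⟩⟩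

/-- The edges of `genEdgeCorona G ends H` when `ends` enumerates the edges of `G`: the edges of
the `H i`, the edges `ends k` of `G`, and the join edge from `p` to the first (`false`) or the
second (`true`) endpoint of `ends p.1`. -/
abbrev CoronaEdge := (Σ i, (H i).edgeSet) ⊕ ι ⊕ ((Σ i, B i) × Bool)

def coronaEdge : CoronaEdge H → Sym2 (A ⊕ Σ i, B i)
  | .inl ⟨i, e⟩ => e.1.map fun v => .inr ⟨i, v⟩
  | .inr (.inl k) => s(.inl (ends k).1, .inl (ends k).2)
  | .inr (.inr (p, b)) => s(.inl (if b then (ends p.1).2 else (ends p.1).1), .inr p)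

variable {G ends H}

theorem coronaEdge_injective (hends : Injective fun k => s((ends k).1, (ends k).2))
    (hne : ∀ k, (ends k).1 ≠ (ends k).2) : Injective (coronaEdge ends H) := by
  rintro (⟨i, ⟨e, he⟩⟩ | k | ⟨⟨i, v⟩, b⟩) (⟨j, ⟨f, hf⟩⟩ | l | ⟨⟨j, w⟩, c⟩) h
  all_goals
    try induction e using Sym2.ind
    try induction f using Sym2.ind
  all_goals simp only [coronaEdge, Sym2.map_mk, Sym2.eq, Sym2.rel_iff', Prod.mk.injEq,
    Prod.swap_prod_mk, Sum.inl.injEq, Sum.inr.injEq, Sigma.mk.injEq, reduceCtorEq, and_self,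
    and_false, false_and, or_self, or_false] at h ⊢
  · obtain rfl : i = j := h.elim (·.1.1) (·.1.1)
    simp only [heq_eq_eq, true_and] at h ⊢
    exact Subtype.ext (by rcases h with ⟨rfl, rfl⟩ | ⟨rfl, rfl⟩ <;> simp [Sym2.eq_swap])
  · exact hends (Sym2.eq_iff.mpr h)
  · obtain ⟨he, rfl, hvw⟩ := h
    refine ⟨⟨rfl, hvw⟩, ?_⟩
    have := hne i
    cases b <;> cases c <;> simp_all [eq_comm]

theorem range_coronaEdge (hG : Set.range (fun k => s((ends k).1, (ends k).2)) = G.edgeSet) :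
    Set.range (coronaEdge ends H) = (genEdgeCorona G ends H).edgeSet := by
  refine subset_antisymm (Set.range_subset_iff.mpr ?_) fun e he => ?_
  · rintro (⟨i, ⟨e, he⟩⟩ | k | ⟨⟨i, v⟩, b⟩)
    · induction e using Sym2.ind
      simpa [coronaEdge, genEdgeCorona_adj_inr_inr] using he
    · have hk : s((ends k).1, (ends k).2) ∈ G.edgeSet := hG ▸ Set.mem_range_self k
      simpa [coronaEdge, genEdgeCorona_adj_inl_inl] using hk
    · cases b <;> simp [coronaEdge, genEdgeCorona_adj_inl_inr]
  · induction e using Sym2.ind with | _ x y => ?_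
    rw [SimpleGraph.mem_edgeSet] at he
    rcases x with a | ⟨i, v⟩ <;> rcases y with b | ⟨j, w⟩
    · have hab : s(a, b) ∈ G.edgeSet := (genEdgeCorona_adj_inl_inl G ends H).mp he
      obtain ⟨k, hk⟩ := hG.symm ▸ hab
      exact ⟨.inr (.inl k), by simpa [coronaEdge, Sym2.eq_iff, Prod.ext_iff] using hk⟩
    · rcases (genEdgeCorona_adj_inl_inr G ends H).mp he with rfl | rfl
      exacts [⟨.inr (.inr (⟨j, w⟩, false)), rfl⟩, ⟨.inr (.inr (⟨j, w⟩, true)), rfl⟩]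
    · rcases (genEdgeCorona_adj_inl_inr G ends H).mp he.symm with rfl | rfl
      exacts [⟨.inr (.inr (⟨i, v⟩, false)), Sym2.eq_swap⟩,
        ⟨.inr (.inr (⟨i, v⟩, true)), Sym2.eq_swap⟩]
    · obtain ⟨rfl, hvw⟩ := (genEdgeCorona_adj_inr_inr G ends H).mp he
      exact ⟨.inl ⟨i, ⟨s(v, w), hvw⟩⟩, rfl⟩

end GenEdgeCorona

section CoronaVertexSums

variable {A ι : Type*} {B : ι → Type*} [Fintype ι] [∀ i, Fintype (B i)] [DecidableEq A]
  [DecidableEq ι] [∀ i, DecidableEq (B i)] {ends : ι → A × A} {H : ∀ i, SimpleGraph (B i)}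
  [∀ i, DecidableRel (H i).Adj]

theorem sum_inr_mem_coronaEdge (lab : CoronaEdge H → ℕ) (i : ι) (v : B i) :
    ∑ c with .inr ⟨i, v⟩ ∈ coronaEdge ends H c, lab c =
      ∑ e : (H i).edgeSet with v ∈ e.1, lab (.inl ⟨i, e⟩) +
        (lab (.inr (.inr (⟨i, v⟩, false))) + lab (.inr (.inr (⟨i, v⟩, true)))) := by
  rw [sum_filter, Fintype.sum_sum_type, Fintype.sum_sum_type, Fintype.sum_sigma,
    sum_eq_single i, sum_filter, Fintype.sum_prod_type]
  · simp [coronaEdge, Sym2.mem_map, add_comm]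
  · intro j _ hji
    simp [coronaEdge, Sym2.mem_map, hji]
  · simp

theorem sum_inl_mem_coronaEdge (lab : CoronaEdge H → ℕ) (a : A) :
    ∑ c with .inl a ∈ coronaEdge ends H c, lab c =
      ∑ k with a = (ends k).1 ∨ a = (ends k).2, lab (.inr (.inl k)) +
        ∑ i, ((if a = (ends i).1 then ∑ w, lab (.inr (.inr (⟨i, w⟩, false))) else 0) +
          (if a = (ends i).2 then ∑ w, lab (.inr (.inr (⟨i, w⟩, true))) else 0)) := by
  rw [sum_filter, sum_filter, Fintype.sum_sum_type, Fintype.sum_sum_type, Fintype.sum_prod_type]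
  simp only [coronaEdge]
  simp only [Sym2.mem_map, Sym2.mem_iff, Sum.inl.injEq, reduceCtorEq, and_false, exists_false,
    or_false, ↓reduceIte, sum_const_zero, zero_add, Fintype.univ_bool, mem_singleton,
    Bool.true_eq_false, Bool.false_eq_true, not_false_eq_true, sum_insert, sum_singleton, add_comm,
    sum_add_distrib, Fintype.sum_sigma, Nat.add_left_cancel_iff]
  congr 1 <;> refine sum_congr rfl fun i _ => ?_ <;> split_ifs <;> simp [*]

end CoronaVertexSums

section PanGraph

variable {r : ℕ} (hr : 3 ≤ r)

theorem panEnds_fst_val (k : Fin (r + 1)) :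
    ((panEnds r hr k).1 : ℕ) =
      if (k : ℕ) = 0 then 0 else if (k : ℕ) = 1 then 1
      else if (k : ℕ) = r then r - 1 else k - 1 := by
  unfold panEnds
  split_ifs <;> rfl

theorem panEnds_snd_val (k : Fin (r + 1)) :
    ((panEnds r hr k).2 : ℕ) =
      if (k : ℕ) = 0 then r else if (k : ℕ) = 1 then 2 else if (k : ℕ) = r then r else k + 1 := by
  unfold panEnds
  split_ifs <;> rfl

theorem panEnds_fst_lt_snd (k : Fin (r + 1)) :
    ((panEnds r hr k).1 : ℕ) < (panEnds r hr k).2 := by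
  rw [panEnds_fst_val, panEnds_snd_val]
  split_ifs <;> omega

theorem panEnds_injective : Injective fun k => s((panEnds r hr k).1, (panEnds r hr k).2) := by
  intro k l h
  have hk := panEnds_fst_lt_snd hr k
  have hl := panEnds_fst_lt_snd hr l
  simp only [Sym2.eq_iff, Fin.ext_iff] at h
  have h1 := panEnds_fst_val hr k; have h2 := panEnds_snd_val hr k
  have h3 := panEnds_fst_val hr l; have h4 := panEnds_snd_val hr l
  have := k.isLt; have := l.isLt
  refine Fin.ext ?_
  split_ifs at h1 h2 h3 h4 <;> omega

theorem range_panEnds :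
    Set.range (fun k => s((panEnds r hr k).1, (panEnds r hr k).2)) = (panGraph r hr).edgeSet :=
  (edgeSet_fromRel_ends _ fun k h => (panEnds_fst_lt_snd hr k).ne (congrArg Fin.val h)).symm

def firstEdges (r a : ℕ) : Finset ℕ :=
  if a = 0 then {0} else if a = 1 then {1, 2} else if a < r then {a + 1} else ∅

def secondEdges (r a : ℕ) : Finset ℕ :=
  if a < 2 then ∅ else if a < r then {a - 1} else {0, r - 1, r}

theorem panEnds_fst_eq_iff (k a : Fin (r + 1)) :
    a = (panEnds r hr k).1 ↔ (k : ℕ) ∈ firstEdges r a := by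
  have := k.isLt; have := a.isLt
  rw [eq_comm, Fin.ext_iff, panEnds_fst_val, firstEdges]
  split_ifs <;> simp only [mem_singleton, mem_insert, notMem_empty, iff_false] <;> omega

theorem panEnds_snd_eq_iff (k a : Fin (r + 1)) :
    a = (panEnds r hr k).2 ↔ (k : ℕ) ∈ secondEdges r a := by
  have := k.isLt; have := a.isLt
  rw [eq_comm, Fin.ext_iff, panEnds_snd_val, secondEdges]
  split_ifs <;> simp only [mem_singleton, mem_insert, notMem_empty, iff_false] <;> omega

include hr in
theorem lt_of_mem_firstEdges {a k : ℕ} (h : k ∈ firstEdges r a) : k < r + 1 := by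
  unfold firstEdges at h
  split_ifs at h <;> simp only [mem_insert, mem_singleton, notMem_empty] at h <;> omega

omit hr in
theorem lt_of_mem_secondEdges {a k : ℕ} (h : k ∈ secondEdges r a) : k < r + 1 := by
  unfold secondEdges at h
  split_ifs at h <;> simp only [mem_insert, mem_singleton, notMem_empty] at h <;> omega

end PanGraph

def panSum (r : ℕ) (n P d : ℕ → ℕ) (a : ℕ) : ℕ :=
  ∑ k ∈ firstEdges r a, (P k + d k) + ∑ k ∈ secondEdges r a, (P k + (n k - d k))

section PanSum

variable {r : ℕ} (hr : 3 ≤ r) (n P d : ℕ → ℕ)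

theorem panSum_zero : panSum r n P d 0 = P 0 + d 0 := by
  simp [panSum, firstEdges, secondEdges]

theorem panSum_one : panSum r n P d 1 = P 1 + d 1 + (P 2 + d 2) := by
  simp [panSum, firstEdges, secondEdges]

theorem panSum_of_lt {a : ℕ} (h2a : 2 ≤ a) (har : a < r) :
    panSum r n P d a = P (a + 1) + d (a + 1) + (P (a - 1) + (n (a - 1) - d (a - 1))) := by
  simp [panSum, firstEdges, secondEdges, har, show a ≠ 0 by omega, show a ≠ 1 by omega,
    show ¬ a < 2 by omega]

include hr in
theorem panSum_self :
    panSum r n P d r =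
      P 0 + (n 0 - d 0) + (P (r - 1) + (n (r - 1) - d (r - 1)) + (P r + (n r - d r))) := by
  rw [panSum, firstEdges, secondEdges, if_neg (by omega), if_neg (by omega), if_neg (by omega),
    if_neg (by omega), if_neg (by omega), sum_empty, zero_add,
    sum_insert (by simp; omega), sum_insert (by simp; omega), sum_singleton]

include hr in
theorem panSum_lt_panSum_succ (hn : ∀ k ≤ r, 2 ≤ n k) (hmono : ∀ k < r, n k ≤ n (k + 1))
    (hd : ∀ k, d k ≤ n k) (hP : ∀ k < r, P k + 2 * (n k * n k) < P (k + 1)) (hP0 : n r ≤ P 0)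
    {a : ℕ} (har : a < r) : panSum r n P d a < panSum r n P d (a + 1) := by
  have hsq : ∀ k ≤ r, 2 * n k ≤ n k * n k := fun k hk => Nat.mul_le_mul_right _ (hn k hk)
  rcases Nat.lt_or_ge a 2 with ha | ha
  · interval_cases a
    · rw [panSum_zero, panSum_one]
      have : P 0 + 2 * (n 0 * n 0) < P 1 := hP 0 (by omega)
      have := hd 0; have := hsq 0 (by omega)
      omega
    · rw [panSum_one, panSum_of_lt n P d le_rfl (by omega)]
      show P 1 + d 1 + (P 2 + d 2) < P 3 + d 3 + (P 1 + (n 1 - d 1))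
      have : P 2 + 2 * (n 2 * n 2) < P 3 := hP 2 (by omega)
      have : n 1 ≤ n 2 := hmono 1 (by omega)
      have := hd 1; have := hd 2
      have := hsq 2 (by omega)
      omega
  rcases Nat.lt_or_ge (a + 1) r with ha' | ha'
  · rw [panSum_of_lt n P d ha (by omega), panSum_of_lt n P d (by omega) ha',
      show a + 1 - 1 = a by omega]
    have := hP (a + 1) ha'; have := hP (a - 1) (by omega); have := hd (a + 1)
    have := hd (a - 1); have := hsq (a + 1) (by omega); have := hsq (a - 1) (by omega)
    rw [show a - 1 + 1 = a by omega] at *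
    omega
  · -- `d r` is added at `u (r - 1)` and subtracted at `u r`; `P 0 ≥ n r` absorbs the difference.
    obtain rfl : a + 1 = r := by omega
    rw [panSum_of_lt n P d ha (by omega), panSum_self hr, Nat.add_sub_cancel]
    have := hP (a - 1) (by omega); have := hd (a + 1); have := hsq (a - 1) (by omega)
    rw [show a - 1 + 1 = a by omega] at *
    omega

include hr in
theorem exists_panSum_notMem {T : Set ℕ} (hT : T.Pairwise fun x y => x + 4 ≤ y ∨ y + 4 ≤ x)
    (hn : ∀ k ≤ r, 2 ≤ n k) :
    ∃ d : ℕ → ℕ, (∀ k, d k ≤ n k) ∧ ∀ a ≤ r, panSum r n P d a ∉ T := by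
  -- `d (k + 2)` is chosen to make the sum at `u (k + 1)` avoid `T`, once `d k` is known;
  -- `d 0` serves `u 0` and `u r` at the same time.
  let c : ℕ → ℕ → ℕ := fun k p => if k = 0 then P 1 + P 2 else P (k + 2) + (P k + (n k - p))
  have hstep : ∀ k p, ∃ e, e ≤ n (k + 2) ∧ (k + 2 ≤ r → c k p + e ∉ T) := by
    intro k p
    by_cases hk : k + 2 ≤ r
    · obtain ⟨e, he, h, -⟩ := exists_le_add_notMem_of_pairwise hT (hn _ hk) (c k p) 0
      exact ⟨e, he, fun _ => h⟩
    · exact ⟨0, Nat.zero_le _, fun h => absurd h hk⟩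
  obtain ⟨s, -, hs1, hs⟩ := exists_seq_of_two_step hstep 0 0
  obtain ⟨e, he, hu0, hur⟩ := exists_le_add_notMem_of_pairwise hT (hn 0 (by omega)) (P 0)
    (P 0 + (P (r - 1) + (n (r - 1) - s (r - 1)) + (P r + (n r - s r))))
  refine ⟨fun k => if k = 0 then e else s k, fun k => ?_, fun a har => ?_⟩
  · rcases k with _ | _ | k
    exacts [he, by simp [hs1], (hs k).1]
  rcases Nat.lt_or_ge a 2 with ha | ha
  · interval_cases a
    · simpa [panSum_zero] using hu0
    · simpa [panSum_one, hs1, c, add_assoc] using (hs 0).2 (by omega)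
  rcases Nat.lt_or_ge a r with ha' | ha'
  · have := (hs (a - 1)).2 (by omega)
    simp only [c, show a - 1 ≠ 0 by omega, if_false, show a - 1 + 2 = a + 1 by omega] at this
    rw [panSum_of_lt n P _ ha ha']
    simp only [show a + 1 ≠ 0 by omega, show a - 1 ≠ 0 by omega, if_false]
    convert this using 2
    omega
  · rw [show a = r by omega, panSum_self hr]
    simp only [if_true, show r - 1 ≠ 0 by omega, show r ≠ 0 by omega, if_false]
    convert hur using 2
    omega

end PanSum

namespace PanCorona

open scoped Classical

variable {r : ℕ} {B : Fin (r + 1) → Type*} [∀ i, Fintype (B i)] (H : ∀ i, SimpleGraph (B i))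

variable (B) in
noncomputable def numVerts (k : ℕ) : ℕ :=
  extend Fin.val (fun i => Fintype.card (B i)) 0 k

noncomputable def numEdges (k : ℕ) : ℕ :=
  extend Fin.val (fun i => Fintype.card (H i).edgeSet) 0 k

noncomputable def totalEdges : ℕ := ∑ i, Fintype.card (H i).edgeSet

theorem numVerts_val (i : Fin (r + 1)) : numVerts B i = Fintype.card (B i) :=
  Fin.val_injective.extend_apply _ 0 i

theorem numEdges_val (i : Fin (r + 1)) : numEdges H i = Fintype.card (H i).edgeSet :=
  Fin.val_injective.extend_apply _ 0 i

theorem two_le_numVerts (hcard : ∀ i, 2 ≤ Fintype.card (B i)) {k : ℕ} (hk : k < r + 1) :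
    2 ≤ numVerts B k :=
  (numVerts_val (B := B) ⟨k, hk⟩).symm ▸ hcard _

theorem numVerts_le_numVerts_succ (hmono : ∀ i j : Fin (r + 1), (i : ℕ) + 1 = (j : ℕ) →
      Fintype.card (B i) ≤ Fintype.card (B j)) {k : ℕ} (hk : k < r) :
    numVerts B k ≤ numVerts B (k + 1) :=
  (numVerts_val (B := B) ⟨k, by omega⟩).trans_le <|
    (hmono ⟨k, by omega⟩ ⟨k + 1, by omega⟩ rfl).trans_eq (numVerts_val _).symm

noncomputable def innerIdx : (Σ i, (H i).edgeSet) ≃ Fin (∑ i, Fintype.card (H i).edgeSet) :=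
  (Equiv.sigmaCongrRight fun i => Fintype.equivFin (H i).edgeSet).trans finSigmaFinEquiv

theorem innerIdx_val (i : Fin (r + 1)) (e : (H i).edgeSet) :
    (innerIdx H ⟨i, e⟩ : ℕ) = ∑ j ∈ range i, numEdges H j + Fintype.equivFin _ e := by
  rw [innerIdx, Equiv.trans_apply, Equiv.sigmaCongrRight_apply, finSigmaFinEquiv_apply]
  exact congrArg (· + _)
    (Fin.sum_castLE_eq_sum_range_extend (fun i => Fintype.card (H i).edgeSet) i)

theorem innerIdx_add_one_mem (i : Fin (r + 1)) (e : (H i).edgeSet) :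
    ∑ j ∈ range i, numEdges H j < innerIdx H ⟨i, e⟩ + 1 ∧
      innerIdx H ⟨i, e⟩ + 1 ≤ ∑ j ∈ range (i + 1), numEdges H j := by
  have := (Fintype.equivFin _ e).isLt
  rw [innerIdx_val, sum_range_succ, numEdges_val]
  omega

noncomputable def innerSum (i : Fin (r + 1)) (v : B i) : ℕ :=
  ∑ e : (H i).edgeSet with v ∈ e.1, (innerIdx H ⟨i, e⟩ + 1)

theorem innerSum_le (i : Fin (r + 1)) (v : B i) :
    innerSum H i v ≤ (H i).degree v * ∑ j ∈ range (i + 1), numEdges H j := by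
  rw [← SimpleGraph.card_filter_mem_edgeSet, ← smul_eq_mul]
  exact sum_le_card_nsmul _ _ _ fun e _ => (innerIdx_add_one_mem H i e).2

theorem le_innerSum (i : Fin (r + 1)) (v : B i) :
    (H i).degree v * (∑ j ∈ range i, numEdges H j + 1) ≤ innerSum H i v := by
  rw [← SimpleGraph.card_filter_mem_edgeSet, ← smul_eq_mul]
  exact card_nsmul_le_sum _ _ _ fun e _ => (innerIdx_add_one_mem H i e).1

noncomputable def rank (i : Fin (r + 1)) : B i ≃ Fin (Fintype.card (B i)) :=
  sortEquiv (innerSum H i)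

noncomputable def vertexIdx : (Σ i, B i) ≃ Fin (∑ i, Fintype.card (B i)) :=
  (Equiv.sigmaCongrRight (rank H)).trans finSigmaFinEquiv

theorem vertexIdx_val (i : Fin (r + 1)) (v : B i) :
    (vertexIdx H ⟨i, v⟩ : ℕ) = ∑ j ∈ range i, numVerts B j + rank H i v := by
  rw [vertexIdx, Equiv.trans_apply, Equiv.sigmaCongrRight_apply, finSigmaFinEquiv_apply]
  exact congrArg (· + _) (Fin.sum_castLE_eq_sum_range_extend (fun i => Fintype.card (B i)) i)

noncomputable def innerVertexSum (p : Σ i, B i) : ℕ :=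
  innerSum H p.1 p.2 + 4 * vertexIdx H p + (2 * (totalEdges H + (r + 1)) + 3)

/-- The join edge of `⟨i, v⟩` to the first endpoint of the `i`-th pan edge gets the larger of
its two labels exactly when the rank of `v` in `H i` is below `d i`. -/
noncomputable def labeling (d : ℕ → ℕ) : CoronaEdge H → ℕ :=
  Sum.elim (fun c => innerIdx H c + 1) <|
    Sum.elim (fun k => totalEdges H + (k + 1)) fun x =>
      totalEdges H + (r + 1) +
        (2 * vertexIdx H x.1 + 1 + (xor x.2 (decide (rank H x.1.1 x.1.2 < d x.1.1))).toNat)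

theorem bijOn_labeling (d : ℕ → ℕ) :
    Set.BijOn (labeling H d) Set.univ (Set.Ioc 0
      (totalEdges H + (r + 1) + 2 * ∑ i, Fintype.card (B i))) := by
  have hinner := bijOn_add_equivFin (innerIdx H) 0
  simp only [zero_add] at hinner
  change Set.BijOn _ _ (Set.Ioc 0 (totalEdges H)) at hinner
  have hbase := bijOn_add_equivFin (Equiv.refl (Fin (r + 1))) (totalEdges H)
  have hjoin := bijOn_pairLabel (vertexIdx H) (fun p => decide (rank H p.1 p.2 < d p.1))
    (totalEdges H + (r + 1))
  exact Set.BijOn.sumElim_Ioc (Nat.zero_le _) (by omega) hinner <|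
    Set.BijOn.sumElim_Ioc (by omega) le_self_add hbase hjoin

noncomputable def joinOffset (k : ℕ) : ℕ := totalEdges H + (r + 1) + 2 * ∑ j ∈ range k, numVerts B j

noncomputable def edgeWeight (k : ℕ) : ℕ :=
  totalEdges H + (k + 1) + (numVerts B k * joinOffset H k + numVerts B k * numVerts B k)

theorem sum_labeling_join (d : ℕ → ℕ) (i : Fin (r + 1)) (b : Bool) :
    ∑ w : B i, labeling H d (.inr (.inr (⟨i, w⟩, b))) =
      numVerts B i * joinOffset H i + numVerts B i * numVerts B i +
        if b then numVerts B i - min (d i) (numVerts B i) else min (d i) (numVerts B i) := by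
  have hlab : ∀ w, labeling H d (.inr (.inr (⟨i, w⟩, b))) =
      joinOffset H i + (2 * rank H i w + 1 + (xor b (decide ((rank H i w : ℕ) < d i))).toNat) := by
    intro w
    simp only [labeling, Sum.elim_inr, vertexIdx_val, joinOffset]
    ring
  simp only [hlab]
  rw [Equiv.sum_comp (rank H i) fun j =>
    joinOffset H i + (2 * j + 1 + (xor b (decide ((j : ℕ) < d i))).toNat), sum_pairLabel,
    numVerts_val]

theorem sum_inr_labeling {ends : Fin (r + 1) → Fin (r + 1) × Fin (r + 1)} (d : ℕ → ℕ)
    (p : Σ i, B i) :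
    ∑ c with .inr p ∈ coronaEdge ends H c, labeling H d c = innerVertexSum H p := by
  obtain ⟨i, v⟩ := p
  rw [sum_inr_mem_coronaEdge]
  simp only [labeling, Sum.elim_inl, Sum.elim_inr, Bool.false_xor, Bool.true_xor,
    innerVertexSum, innerSum]
  cases decide ((rank H i v : ℕ) < d i) <;> simp only [Bool.toNat_false, Bool.toNat_true,
    Bool.not_false, Bool.not_true] <;> omega

theorem sum_inl_labeling (hr : 3 ≤ r) {d : ℕ → ℕ} (hd : ∀ k, d k ≤ numVerts B k)
    (a : Fin (r + 1)) :
    ∑ c with .inl a ∈ coronaEdge (panEnds r hr) H c, labeling H d c =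
      panSum r (numVerts B) (edgeWeight H) d a := by
  rw [sum_inl_mem_coronaEdge, sum_filter, ← sum_add_distrib, panSum,
    ← Fin.sum_ite_eq_sum_of_iff _ _ (fun k => panEnds_fst_eq_iff hr k a)
      (fun k => lt_of_mem_firstEdges hr),
    ← Fin.sum_ite_eq_sum_of_iff _ _ (fun k => panEnds_snd_eq_iff hr k a)
      (fun k => lt_of_mem_secondEdges), ← sum_add_distrib]
  refine sum_congr rfl fun k _ => ?_
  simp only [sum_labeling_join]
  simp only [labeling, Sum.elim_inl, Sum.elim_inr, Bool.false_eq_true,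
    if_true, if_false, edgeWeight, min_eq_left (hd k)]
  have hne : a = (panEnds r hr k).1 → a ≠ (panEnds r hr k).2 := fun h1 h2 =>
    (panEnds_fst_lt_snd hr k).ne (congrArg Fin.val (h1.symm.trans h2))
  by_cases h1 : a = (panEnds r hr k).1
  · simp only [if_pos h1, if_neg (hne h1), if_pos (Or.inl h1)]
    omega
  · by_cases h2 : a = (panEnds r hr k).2
    · simp only [if_neg h1, if_pos h2, if_pos (Or.inr h2)]
      omega
    · simp only [if_neg h1, if_neg h2, if_neg (not_or.mpr ⟨h1, h2⟩)]

theorem edgeWeight_add_lt_succ (hmono : ∀ k < r, numVerts B k ≤ numVerts B (k + 1)) {k : ℕ}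
    (hk : k < r) :
    edgeWeight H k + 2 * (numVerts B k * numVerts B k) < edgeWeight H (k + 1) := by
  have hA : joinOffset H (k + 1) = joinOffset H k + 2 * numVerts B k := by
    rw [joinOffset, joinOffset, sum_range_succ]
    ring
  have h1 := Nat.mul_le_mul_right (joinOffset H (k + 1)) (hmono k hk)
  have h2 := Nat.mul_le_mul (hmono k hk) (hmono k hk)
  have h3 : numVerts B k * joinOffset H (k + 1) =
      numVerts B k * joinOffset H k + 2 * (numVerts B k * numVerts B k) := by
    rw [hA]
    ring
  unfold edgeWeight
  omega

theorem numVerts_le_edgeWeight_zero (hconn : (H (Fin.last r)).Connected) :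
    numVerts B r ≤ edgeWeight H 0 := by
  have h1 := hconn.card_vert_le_card_edgeSet_add_one
  have h2 : Fintype.card (H (Fin.last r)).edgeSet ≤ totalEdges H :=
    single_le_sum (f := fun i => Fintype.card (H i).edgeSet) (fun _ _ => Nat.zero_le _) (mem_univ _)
  rw [Nat.card_eq_fintype_card, Nat.card_eq_fintype_card] at h1
  have h3 : numVerts B r = Fintype.card (B (Fin.last r)) := numVerts_val (Fin.last r)
  unfold edgeWeight
  omega

section InnerVertexSums

variable {H} (hdeg : ∀ i j : Fin (r + 1), i < j → ∀ v w, (H i).degree v ≤ (H j).degree w)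
  (hpos : ∀ i v, 0 < (H i).degree v)
include hdeg hpos

theorem innerSum_lt_innerSum {i j : Fin (r + 1)} (hij : i < j) (v : B i) (w : B j) :
    innerSum H i v < innerSum H j w := by
  have hE : ∑ k ∈ range (i + 1), numEdges H k ≤ ∑ k ∈ range j, numEdges H k :=
    sum_le_sum_of_subset (range_subset_range.mpr hij)
  calc innerSum H i v ≤ (H i).degree v * ∑ k ∈ range (i + 1), numEdges H k := innerSum_le H i v
    _ ≤ (H j).degree w * ∑ k ∈ range j, numEdges H k :=
      Nat.mul_le_mul (hdeg i j hij v w) hE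
    _ < (H j).degree w * (∑ k ∈ range j, numEdges H k + 1) :=
      Nat.mul_lt_mul_of_pos_left (Nat.lt_succ_self _) (hpos j w)
    _ ≤ innerSum H j w := le_innerSum H j w

theorem innerSum_le_of_vertexIdx_le {p q : Σ i, B i} (h : vertexIdx H p ≤ vertexIdx H q) :
    innerSum H p.1 p.2 ≤ innerSum H q.1 q.2 := by
  obtain ⟨i, v⟩ := p
  obtain ⟨j, w⟩ := q
  rw [Fin.le_def, vertexIdx_val, vertexIdx_val] at h
  rcases lt_trichotomy i j with hij | rfl | hij
  · exact (innerSum_lt_innerSum hdeg hpos hij v w).le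
  · exact le_of_sortEquiv_le _ (Fin.le_def.mpr (by simpa [rank] using h))
  · have hN : ∑ k ∈ range (j + 1), numVerts B k ≤ ∑ k ∈ range i, numVerts B k :=
      sum_le_sum_of_subset (range_subset_range.mpr hij)
    have := (rank H j w).isLt
    rw [sum_range_succ, numVerts_val] at hN
    omega

theorem innerVertexSum_add_four_le {p q : Σ i, B i} (h : vertexIdx H p < vertexIdx H q) :
    innerVertexSum H p + 4 ≤ innerVertexSum H q := by
  have := innerSum_le_of_vertexIdx_le hdeg hpos h.le
  rw [Fin.lt_def] at h
  unfold innerVertexSum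
  omega

theorem innerVertexSum_injective : Injective (innerVertexSum H) := by
  intro p q h
  by_contra hpq
  rcases lt_or_gt_of_ne ((vertexIdx H).injective.ne hpq) with hlt | hlt
  · have := innerVertexSum_add_four_le hdeg hpos hlt; omega
  · have := innerVertexSum_add_four_le hdeg hpos hlt; omega

theorem pairwise_range_innerVertexSum :
    (Set.range (innerVertexSum H)).Pairwise fun x y => x + 4 ≤ y ∨ y + 4 ≤ x := by
  rintro _ ⟨p, rfl⟩ _ ⟨q, rfl⟩ hne
  rcases lt_or_gt_of_ne ((vertexIdx H).injective.ne fun h => hne (congrArg _ h)) with hlt | hlt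
  exacts [.inl (innerVertexSum_add_four_le hdeg hpos hlt),
    .inr (innerVertexSum_add_four_le hdeg hpos hlt)]

theorem injective_sum_labeling (hr : 3 ≤ r) (hn : ∀ k ≤ r, 2 ≤ numVerts B k)
    (hmono : ∀ k < r, numVerts B k ≤ numVerts B (k + 1))
    (hconn : (H (Fin.last r)).Connected) {d : ℕ → ℕ} (hd : ∀ k, d k ≤ numVerts B k)
    (havoid : ∀ a ≤ r, panSum r (numVerts B) (edgeWeight H) d a ∉ Set.range (innerVertexSum H)) :
    Injective fun x => ∑ c with x ∈ coronaEdge (panEnds r hr) H c, labeling H d c := by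
  have hpan : StrictMono fun a : Fin (r + 1) => panSum r (numVerts B) (edgeWeight H) d a :=
    Fin.strictMono_iff_lt_succ.mpr fun a =>
      panSum_lt_panSum_succ hr _ _ _ hn hmono hd (fun k hk => edgeWeight_add_lt_succ H hmono hk)
        (numVerts_le_edgeWeight_zero H hconn) a.isLt
  rintro (a | p) (b | q) h <;> simp only [sum_inl_labeling H hr hd, sum_inr_labeling] at h
  · exact congrArg _ (hpan.injective h)
  · exact absurd ⟨q, h.symm⟩ (havoid a a.is_le)
  · exact absurd ⟨p, h⟩ (havoid b b.is_le)
  · exact congrArg _ (innerVertexSum_injective hdeg hpos h)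

end InnerVertexSums

end PanCorona

open PanCorona in
/-- `G₁ ⋄ (H₀, H₁, ..., H_r)`, `r ≥ 3`, is antimagic provided the `Hᵢ` are connected,
have at least two vertices, are ordered by size, and
(a) `Δ(H₀) < δ(H₁)`;
(b) `Δ(Hᵢ) ≤ δ(Hᵢ₊₁)` for `1 ≤ i ≤ r-1`;
(c) the corona-degree of `u₀` is at most the corona-degree of every vertex of every `Hᵢ`;
(d) the corona-degree of every vertex of `H_r` is at most the corona-degree of `u₁`.
(Conditions (a), (b) are stated pointwise: every degree in `Hᵢ` is `<` resp. `≤` every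
degree in `Hᵢ₊₁`.) -/
theorem pan_corona_antimagic
    (r : ℕ) (hr : 3 ≤ r)
    (B : Fin (r + 1) → Type*) [∀ i, Fintype (B i)]
    (H : ∀ i, SimpleGraph (B i))
    (hconn : ∀ i, (H i).Connected)
    (hcard : ∀ i, 2 ≤ Fintype.card (B i))
    (hmono : ∀ i j : Fin (r + 1), (i : ℕ) + 1 = (j : ℕ) →
      Fintype.card (B i) ≤ Fintype.card (B j))
    (ha : ∀ (u : B ⟨0, by omega⟩) (v : B ⟨1, by omega⟩),
      vdeg (H ⟨0, by omega⟩) u < vdeg (H ⟨1, by omega⟩) v)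
    (hb : ∀ i j : Fin (r + 1), 1 ≤ (i : ℕ) → (i : ℕ) + 1 = (j : ℕ) →
      ∀ (u : B i) (v : B j), vdeg (H i) u ≤ vdeg (H j) v) :
    IsAntimagic (panCorona r hr H) := by
  classical
  have : ∀ i, Nonempty (B i) := fun i => Fintype.card_pos_iff.mp (by have := hcard i; omega)
  have hpos : ∀ i v, 0 < (H i).degree v := fun i v =>
    have := Fintype.one_lt_card_iff_nontrivial.mp (hcard i)
    (hconn i).preconnected.degree_pos_of_nontrivial v
  have hstep : ∀ i j : Fin (r + 1), (i : ℕ) + 1 = j → ∀ u v, vdeg (H i) u ≤ vdeg (H j) v := by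
    rintro ⟨_ | i, hi⟩ ⟨j, hj⟩ hij u v
    · obtain rfl : j = 1 := by simpa using hij.symm
      exact (ha u v).le
    · exact hb _ _ (by simp) hij u v
  have hdeg : ∀ i j : Fin (r + 1), i < j → ∀ v w, (H i).degree v ≤ (H j).degree w :=
    fun i j hij v w => by
      simpa only [vdeg_eq_degree] using Fin.le_of_lt_of_forall_succ _ hstep hij v w
  have hn : ∀ k ≤ r, 2 ≤ numVerts B k := fun k hk => two_le_numVerts hcard (by omega)
  obtain ⟨d, hd, havoid⟩ :=
    exists_panSum_notMem hr (numVerts B) (edgeWeight H) (pairwise_range_innerVertexSum hdeg hpos) hn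
  exact isAntimagic_of_edgeEnum
    (coronaEdge_injective (panEnds_injective hr)
      fun k h => (panEnds_fst_lt_snd hr k).ne (congrArg Fin.val h))
    (range_coronaEdge (range_panEnds hr)) (bijOn_labeling H d)
    (injective_sum_labeling hdeg hpos hr hn (fun k hk => numVerts_le_numVerts_succ hmono hk)
      (hconn _) hd havoid)
end

section
/- Let $H_1, H_2, H_3$ be connected graphs, each on at least two vertices. Then the generalized edge corona $K_{1,3} \diamond (H_1, H_2, H_3)$ — obtained from the star $K_{1,3}$ with center $v_0$ and leaves $x_1, y_1, z_1$ by joining both endpoints of the edge $v_0x_1$ to every vertex of $H_1$, both endpoints of $v_0y_1$ to every vertex of $H_2$, and both endpoints of $v_0z_1$ to every vertex of $H_3$ — is antimagic (with no further conditions on $H_1, H_2, H_3$). -/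
open Classical

namespace K13

set_option linter.unusedSectionVars false

variable {B : Fin (3*1) → Type*} [∀ n, Fintype (B n)] (H : ∀ n, SimpleGraph (B n))

noncomputable def M : ℕ := Fintype.card (Σ n, ↥(H n).edgeSet)

noncomputable def P (B : Fin (3*1) → Type*) [∀ n, Fintype (B n)] : ℕ := Fintype.card (Σ n, B n)

noncomputable def Q (B : Fin (3*1) → Type*) [∀ n, Fintype (B n)] : ℕ :=
  Fintype.card (Fin (3*1) ⊕ Σ n, B n)

lemma Q_eq : Q B = 3 + P B := by
  simp [Q, P, Fintype.card_sum]

noncomputable def eIE : (Σ n, ↥(H n).edgeSet) ≃ Fin (M H) := Fintype.equivFin _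

noncomputable def eIV : (Σ n, B n) ≃ Fin (P B) := Fintype.equivFin _

noncomputable def iLab (n : Fin (3*1)) (e : Sym2 (B n)) : ℕ :=
  if h : e ∈ (H n).edgeSet then 1 + (eIE H ⟨n, ⟨e, h⟩⟩).val else 0

noncomputable def aLab (p : Σ n, B n) : ℕ := M H + 1 + (eIV p).val

noncomputable def sSum : (Σ n, B n) → ℕ
  | ⟨n, u⟩ => ∑ u' : B n, if (H n).Adj u u' then iLab H n s(u, u') else 0

noncomputable def t : (Fin (3*1) ⊕ Σ n, B n) → ℕ
  | .inl n => ∑ u : B n, aLab H ⟨n, u⟩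
  | .inr p => aLab H p + sSum H p

noncomputable def eNC : (Fin (3*1) ⊕ Σ n, B n) ≃ Fin (Q B) := Fintype.equivFin _

noncomputable def key (w : Fin (3*1) ⊕ Σ n, B n) : ℕ := t H w * Q B + (eNC w).val

lemma Q_pos : 0 < Q B := by rw [Q_eq]; omega

lemma key_div (w : Fin (3*1) ⊕ Σ n, B n) : key H w / Q B = t H w := by
  rw [key, mul_comm, Nat.mul_add_div (Q_pos (B := B)), Nat.div_eq_of_lt (eNC w).isLt, add_zero]

lemma key_mod (w : Fin (3*1) ⊕ Σ n, B n) : key H w % Q B = (eNC (B := B) w).val := by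
  rw [key, mul_comm, Nat.mul_add_mod, Nat.mod_eq_of_lt (eNC w).isLt]

lemma key_inj : Function.Injective (key H) := by
  intro w w' h
  have := (key_mod H w).symm.trans (h ▸ key_mod H w')
  exact (eNC (B := B)).injective (Fin.ext this)

noncomputable def keyset : Finset ℕ := Finset.univ.image (key H)

lemma keyset_card : (keyset H (B := B)).card = Q B := by
  rw [keyset, Finset.card_image_of_injective _ (key_inj H), Finset.card_univ, Q]

noncomputable def oi : Fin (Q B) ≃o ↥(keyset H (B := B)) :=
  (keyset H).orderIsoOfFin (keyset_card H)

lemma key_mem (w : Fin (3*1) ⊕ Σ n, B n) : key H w ∈ keyset H (B := B) :=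
  Finset.mem_image_of_mem _ (Finset.mem_univ w)

noncomputable def rank (w : Fin (3*1) ⊕ Σ n, B n) : Fin (Q B) :=
  (oi H).symm ⟨key H w, key_mem H w⟩

lemma rank_inj : Function.Injective (rank H (B := B)) := by
  intro w w' h
  apply key_inj H
  have := (oi H (B := B)).symm.injective.eq_iff.mp h
  exact congrArg Subtype.val this

lemma rank_mono {w w' : Fin (3*1) ⊕ Σ n, B n} (h : t H w < t H w') :
    rank H w < rank H w' := by
  have hk : key H w < key H w' := by
    have := (eNC (B := B) w).isLt
    unfold key
    calc t H w * Q B + (eNC (B:=B) w).val < (t H w + 1) * Q B := by nlinarith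
    _ ≤ t H w' * Q B := Nat.mul_le_mul_right _ h
    _ ≤ _ := Nat.le_add_right _ _
  exact (oi H (B := B)).symm.lt_iff_lt.mpr hk

lemma rank_surj (j : Fin (Q B)) : ∃ w, rank H w = j := by
  obtain ⟨v, hv⟩ := (oi H (B := B)) j |>.2 |> Finset.mem_image.mp
  exact ⟨v, by rw [rank]; rw [show (⟨key H v, key_mem H v⟩ : ↥(keyset H (B:=B))) = oi H j from Subtype.ext hv.2]; simp⟩

noncomputable def cLab (w : Fin (3*1) ⊕ Σ n, B n) : ℕ := M H + P B + 1 + (rank H w).val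


def Xv (n : Fin (3*1)) : SpiderV 1 ⊕ Σ n, B n := Sum.inl (some (⟨n.val, by omega⟩, 0))

def v0 : SpiderV 1 ⊕ Σ n, B n := Sum.inl none

lemma spiderEnds_one (n : Fin (3*1)) :
    spiderEnds 1 le_rfl n = (none, some (⟨n.val, by omega⟩, 0)) := by
  have h3 : (n:ℕ) < 3 := by have := n.isLt; omega
  rw [spiderEnds, if_pos (by omega)]
  simp only [Prod.mk.injEq, Option.some.injEq, Fin.mk.injEq]
  exact ⟨trivial, by omega, Subsingleton.elim _ _⟩

lemma pt_eq {i j : Fin 3} {k k' : Fin 1} (h : i.val = j.val) :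
    (some (i, k) : SpiderV 1) = some (j, k') := by
  rw [Fin.ext h, Subsingleton.elim k k']

lemma adj_v0_some (i : Fin 3) (k : Fin 1) :
    (spiderCorona 1 le_rfl H).Adj (Sum.inl none) (Sum.inl (some (i, k))) := by
  rw [spiderCorona, genEdgeCorona, SimpleGraph.fromRel_adj]
  refine ⟨by simp, Or.inl ?_⟩
  show (spiderGraph 1 le_rfl).Adj none _
  rw [spiderGraph, SimpleGraph.fromRel_adj]
  refine ⟨by simp, Or.inl ⟨⟨i.val, by have := i.isLt; omega⟩, ?_⟩⟩
  rw [spiderEnds_one]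
  exact ⟨rfl, pt_eq rfl⟩

lemma adj_v0_inr (p : Σ n, B n) :
    (spiderCorona 1 le_rfl H).Adj (Sum.inl none) (Sum.inr p) := by
  obtain ⟨n, u⟩ := p
  rw [spiderCorona, genEdgeCorona, SimpleGraph.fromRel_adj]
  exact ⟨by simp, Or.inl (by show _ ∨ _; rw [spiderEnds_one]; left; rfl)⟩

lemma adj_X_inr (i : Fin 3) (k : Fin 1) (n : Fin (3*1)) (u : B n) :
    (spiderCorona 1 le_rfl H).Adj (Sum.inl (some (i, k))) (Sum.inr ⟨n, u⟩) ↔ (i : ℕ) = (n : ℕ) := by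
  rw [spiderCorona, genEdgeCorona, SimpleGraph.fromRel_adj]
  constructor
  · rintro ⟨-, h | h⟩
    · rcases h with h | h
      · rw [spiderEnds_one] at h; simp at h
      · rw [spiderEnds_one] at h; simp at h
        exact congrArg Fin.val h.1
    · exact h.elim
  · intro h
    refine ⟨by simp, Or.inl (Or.inr ?_)⟩
    rw [spiderEnds_one]
    exact pt_eq (by simpa using h)

lemma adj_inr_inr (n : Fin (3*1)) (u u' : B n) :
    (spiderCorona 1 le_rfl H).Adj (Sum.inr ⟨n, u⟩) (Sum.inr ⟨n, u'⟩) ↔ (H n).Adj u u' := by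
  rw [spiderCorona, genEdgeCorona, SimpleGraph.fromRel_adj]
  constructor
  · rintro ⟨hne, h | h⟩ <;> obtain ⟨h', hadj⟩ := h
    · exact hadj
    · exact ((H n).adj_symm hadj)
  · intro h
    exact ⟨by simp [fun e => (H n).ne_of_adj h e], Or.inl ⟨rfl, h⟩⟩

lemma not_adj_inr_inr {n m : Fin (3*1)} (hnm : n ≠ m) (u : B n) (u' : B m) :
    ¬ (spiderCorona 1 le_rfl H).Adj (Sum.inr ⟨n, u⟩) (Sum.inr ⟨m, u'⟩) := by
  rw [spiderCorona, genEdgeCorona, SimpleGraph.fromRel_adj]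
  rintro ⟨-, h | h⟩ <;> obtain ⟨h', -⟩ := h
  · exact hnm h'
  · exact hnm h'.symm

lemma not_adj_X_X (z z' : Fin 3 × Fin 1) :
    ¬ (spiderCorona 1 le_rfl H).Adj (Sum.inl (some z)) (Sum.inl (some z')) := by
  rw [spiderCorona, genEdgeCorona, SimpleGraph.fromRel_adj]
  have key : ∀ w w' : Fin 3 × Fin 1, (spiderGraph 1 le_rfl).Adj (some w) (some w') → False := by
    intro w w' h
    rw [spiderGraph, SimpleGraph.fromRel_adj] at h
    rcases h with ⟨-, ⟨n, hn, -⟩ | ⟨n, hn, -⟩⟩ <;> rw [spiderEnds_one] at hn <;> simp at hn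
  rintro ⟨hne, h | h⟩
  · exact key _ _ h
  · exact key _ _ h

noncomputable def g : (SpiderV 1 ⊕ Σ n, B n) → (SpiderV 1 ⊕ Σ n, B n) → ℕ
  | Sum.inl none, Sum.inl (some (i, _)) => cLab H (Sum.inl ⟨i.val, by have := i.isLt; omega⟩)
  | Sum.inl (some (i, _)), Sum.inl none => cLab H (Sum.inl ⟨i.val, by have := i.isLt; omega⟩)
  | Sum.inl none, Sum.inr p => cLab H (Sum.inr p)
  | Sum.inr p, Sum.inl none => cLab H (Sum.inr p)
  | Sum.inl (some _), Sum.inr p => aLab H p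
  | Sum.inr p, Sum.inl (some _) => aLab H p
  | Sum.inr ⟨n, u⟩, Sum.inr ⟨n', u'⟩ => if h : n' = n then iLab H n s(u, h ▸ u') else 0
  | _, _ => 0

lemma g_symm (x y : SpiderV 1 ⊕ Σ n, B n) : g H x y = g H y x := by
  rcases x with (_ | z) | ⟨n, u⟩ <;> rcases y with (_ | w) | ⟨m, v⟩ <;> try rfl
  show (if h : m = n then iLab H n s(u, h ▸ v) else 0) = (if h : n = m then iLab H m s(v, h ▸ u) else 0)
  rcases eq_or_ne n m with rfl | hne
  · rw [dif_pos rfl, dif_pos rfl]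
    show iLab H n s(u, v) = iLab H n s(v, u)
    exact congrArg _ (Sym2.eq_swap)
  · rw [dif_neg hne.symm, dif_neg hne]

noncomputable def f : Sym2 (SpiderV 1 ⊕ Σ n, B n) → ℕ := Sym2.lift ⟨g H, g_symm H⟩

lemma f_mk (x y : SpiderV 1 ⊕ Σ n, B n) : f H s(x, y) = g H x y := Sym2.lift_mk _ _ _

noncomputable def W (v : SpiderV 1 ⊕ Σ n, B n) : ℕ :=
  ∑ u : (SpiderV 1 ⊕ Σ n, B n), if (spiderCorona 1 le_rfl H).Adj v u then f H s(v, u) else 0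

def vtx : (Fin (3*1) ⊕ Σ n, B n) → SpiderV 1 ⊕ Σ n, B n
  | .inl n => Sum.inl (some (⟨n.val, by have := n.isLt; omega⟩, 0))
  | .inr p => Sum.inr p

lemma vtx_inj : Function.Injective (vtx (B := B)) := by
  rintro (n | p) (m | q) h
  · simp only [vtx, Sum.inl.injEq, Option.some.injEq, Prod.mk.injEq, Fin.mk.injEq] at h
    exact congrArg Sum.inl (Fin.ext h.1)
  · exact absurd h (by simp [vtx])
  · exact absurd h (by simp [vtx])
  · simp only [vtx, Sum.inr.injEq] at h
    exact congrArg Sum.inr h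

lemma W_v0 : W H (Sum.inl none) = ∑ w : Fin (3*1) ⊕ Σ n, B n, cLab H w := by
  rw [W, Fintype.sum_sum_type, Fintype.sum_sum_type]
  congr 1
  · rw [Fintype.sum_option, if_neg ((spiderCorona 1 le_rfl H).irrefl), zero_add,
      Fintype.sum_prod_type,
      ← (finCongr (show 3 = 3*1 by norm_num)).sum_comp (fun n => cLab H (Sum.inl n))]
    apply Finset.sum_congr rfl
    intro i _
    rw [Fin.sum_univ_one, if_pos (adj_v0_some H i 0), f_mk]
    show cLab H (Sum.inl _) = _
    exact congrArg (fun n => cLab H (Sum.inl n)) (Fin.ext rfl)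
  · apply Finset.sum_congr rfl
    intro p _
    rw [if_pos (adj_v0_inr H p), f_mk]
    obtain ⟨n, u⟩ := p
    rfl

lemma W_vtx (w : Fin (3*1) ⊕ Σ n, B n) : W H (vtx w) = cLab H w + t H w := by
  rcases w with n | ⟨n, u⟩
  · -- leaf X n
    rw [show vtx (Sum.inl n) = (Sum.inl (some (⟨n.val, by have := n.isLt; omega⟩, 0)) :
      SpiderV 1 ⊕ Σ n, B n) from rfl]
    rw [W, Fintype.sum_sum_type]
    have h1 : ∑ a : SpiderV 1, (if (spiderCorona 1 le_rfl H).Adj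
        (Sum.inl (some (⟨n.val, by have := n.isLt; omega⟩, 0))) (Sum.inl a)
        then f H s(Sum.inl (some (⟨n.val, by have := n.isLt; omega⟩, 0)), Sum.inl a) else 0)
        = cLab H (Sum.inl n) := by
      rw [Fintype.sum_option]
      rw [if_pos ((adj_v0_some H _ 0).symm), f_mk,
        Finset.sum_eq_zero (fun z _ => if_neg (not_adj_X_X H _ _)), add_zero]
      show cLab H (Sum.inl _) = _
      exact congrArg (fun m => cLab H (Sum.inl m)) (Fin.ext rfl)
    have h2 : ∑ p : (Σ n, B n), (if (spiderCorona 1 le_rfl H).Adj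
        (Sum.inl (some (⟨n.val, by have := n.isLt; omega⟩, 0))) (Sum.inr p)
        then f H s(Sum.inl (some (⟨n.val, by have := n.isLt; omega⟩, 0)), Sum.inr p) else 0)
        = t H (Sum.inl n) := by
      rw [← Finset.univ_sigma_univ, Finset.sum_sigma]
      rw [show t H (Sum.inl n) = ∑ u : B n, aLab H ⟨n, u⟩ from rfl]
      refine Fintype.sum_eq_single n ?_ |>.trans ?_
      · intro m hm
        apply Finset.sum_eq_zero
        intro u _
        refine if_neg ?_
        rw [adj_X_inr]
        intro hv
        exact hm (Fin.ext (by simpa using hv.symm))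
      · apply Finset.sum_congr rfl
        intro u _
        rw [if_pos ((adj_X_inr H _ _ n u).mpr rfl), f_mk]
        rfl
    rw [h1, h2]
  · -- inner vertex
    rw [show vtx (Sum.inr ⟨n, u⟩) = (Sum.inr ⟨n, u⟩ : SpiderV 1 ⊕ Σ n, B n) from rfl]
    rw [W, Fintype.sum_sum_type]
    have h1 : ∑ a : SpiderV 1, (if (spiderCorona 1 le_rfl H).Adj (Sum.inr ⟨n, u⟩) (Sum.inl a)
        then f H s(Sum.inr ⟨n, u⟩, Sum.inl a) else 0) = cLab H (Sum.inr ⟨n, u⟩) + aLab H ⟨n, u⟩ := by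
      rw [Fintype.sum_option]
      rw [if_pos (adj_v0_inr H ⟨n, u⟩).symm, f_mk]
      have hrest : ∑ z : Fin 3 × Fin 1, (if (spiderCorona 1 le_rfl H).Adj (Sum.inr ⟨n, u⟩) (Sum.inl (some z))
          then f H s(Sum.inr ⟨n, u⟩, Sum.inl (some z)) else 0) = aLab H ⟨n, u⟩ := by
        rw [Fintype.sum_prod_type]
        refine Fintype.sum_eq_single (⟨n.val, by have := n.isLt; omega⟩ : Fin 3) ?_ |>.trans ?_
        · intro i hi
          apply Finset.sum_eq_zero
          intro k _
          refine if_neg ?_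
          intro hadj
          have := (adj_X_inr H i k n u).mp hadj.symm
          exact hi (Fin.ext (by simpa using this))
        · rw [Fin.sum_univ_one,
            if_pos (((adj_X_inr H _ 0 n u).mpr rfl).symm), f_mk]
          rfl
      rw [hrest]
      rfl
    have h2 : ∑ p : (Σ m, B m), (if (spiderCorona 1 le_rfl H).Adj (Sum.inr ⟨n, u⟩) (Sum.inr p)
        then f H s(Sum.inr ⟨n, u⟩, Sum.inr p) else 0) = sSum H ⟨n, u⟩ := by
      rw [← Finset.univ_sigma_univ, Finset.sum_sigma]
      refine Fintype.sum_eq_single n ?_ |>.trans ?_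
      · intro m hm
        apply Finset.sum_eq_zero
        intro u' _
        exact if_neg (not_adj_inr_inr H (Ne.symm hm) u u')
      · rw [show sSum H ⟨n, u⟩ = ∑ u' : B n, if (H n).Adj u u' then iLab H n s(u, u') else 0 from rfl]
        apply Finset.sum_congr rfl
        intro u' _
        rw [adj_inr_inr]
        split
        · rw [f_mk]
          show (if h : n = n then iLab H n s(u, h ▸ u') else 0) = _
          rw [dif_pos rfl]
        · rfl
    rw [h1, h2, show t H (Sum.inr ⟨n, u⟩) = aLab H ⟨n, u⟩ + sSum H ⟨n, u⟩ from rfl]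
    omega


lemma aLab_bounds (p : Σ n, B n) : M H + 1 ≤ aLab H p ∧ aLab H p ≤ M H + P B := by
  have := (eIV (B := B) p).isLt
  unfold aLab; omega

lemma cLab_bounds (w : Fin (3*1) ⊕ Σ n, B n) :
    M H + P B + 1 ≤ cLab H w ∧ cLab H w ≤ M H + P B + Q B := by
  have := (rank H (B := B) w).isLt
  unfold cLab; omega

lemma iLab_bounds (n : Fin (3*1)) (d : Sym2 (B n)) (hd : d ∈ (H n).edgeSet) :
    1 ≤ iLab H n d ∧ iLab H n d ≤ M H := by
  rw [iLab, dif_pos hd]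
  have := (eIE H ⟨n, ⟨d, hd⟩⟩).isLt
  omega

lemma card_le_P (n : Fin (3*1)) : Fintype.card (B n) ≤ P B := by
  rw [P, Fintype.card_sigma]
  exact Finset.single_le_sum (f := fun m => Fintype.card (B m)) (fun _ _ => Nat.zero_le _)
    (Finset.mem_univ n)

lemma sSum_le (n : Fin (3*1)) (u : B n) : sSum H ⟨n, u⟩ ≤ P B * M H := by
  have h1 : sSum H ⟨n, u⟩ ≤ ∑ _u' : B n, M H := by
    apply Finset.sum_le_sum
    intro u' _
    split
    · rename_i h
      exact (iLab_bounds H n s(u, u') ((H n).mem_edgeSet.mpr h)).2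
    · exact Nat.zero_le _
  rw [Finset.sum_const, Finset.card_univ, smul_eq_mul] at h1
  exact h1.trans (Nat.mul_le_mul_right _ (card_le_P n))

lemma t_lt (w : Fin (3*1) ⊕ Σ n, B n) : t H w < (P B + 2) * (M H + P B + 1) := by
  rcases w with n | ⟨n, u⟩
  · have h1 : t H (Sum.inl n) ≤ Fintype.card (B n) * (M H + P B) := by
      show (∑ u : B n, aLab H ⟨n, u⟩) ≤ _
      calc (∑ u : B n, aLab H ⟨n, u⟩) ≤ ∑ _u : B n, (M H + P B) :=
        Finset.sum_le_sum (fun u _ => (aLab_bounds H ⟨n, u⟩).2)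
      _ = Fintype.card (B n) * (M H + P B) := by
        rw [Finset.sum_const, Finset.card_univ, smul_eq_mul]
    have h2 := card_le_P (B := B) n
    nlinarith
  · have h1 : t H (Sum.inr ⟨n, u⟩) ≤ (M H + P B) + P B * M H := by
      show aLab H ⟨n, u⟩ + sSum H ⟨n, u⟩ ≤ _
      exact Nat.add_le_add (aLab_bounds H ⟨n, u⟩).2 (sSum_le H n u)
    nlinarith

lemma W_v0_gt (w : Fin (3*1) ⊕ Σ n, B n) : W H (vtx w) < W H (Sum.inl none) := by
  rw [W_v0, W_vtx]
  rw [← Finset.add_sum_erase _ _ (Finset.mem_univ w)]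
  have h1 : (P B + 2) * (M H + P B + 1) ≤ ∑ w' ∈ Finset.univ.erase w, cLab H w' := by
    calc (P B + 2) * (M H + P B + 1)
        = (Finset.univ.erase w).card * (M H + P B + 1) := by
          rw [Finset.card_erase_of_mem (Finset.mem_univ w), Finset.card_univ, ← Q, Q_eq]
          congr 1
          omega
      _ ≤ _ := by
          rw [← smul_eq_mul]
          exact Finset.card_nsmul_le_sum _ _ _ (fun x _ => (cLab_bounds H x).1)
  have h2 := t_lt H w
  omega

lemma W_inj_aux {w w' : Fin (3*1) ⊕ Σ n, B n} (h : W H (vtx w) = W H (vtx w')) : w = w' := by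
  rw [W_vtx, W_vtx] at h
  rcases lt_trichotomy (t H w) (t H w') with ht | ht | ht
  · have := rank_mono H ht
    have : cLab H w < cLab H w' := by
      unfold cLab; have := Fin.lt_iff_val_lt_val.mp this; omega
    omega
  · have hc : cLab H w = cLab H w' := by omega
    have : rank H w = rank H w' := by
      unfold cLab at hc; exact Fin.ext (by omega)
    exact rank_inj H this
  · have := rank_mono H ht
    have : cLab H w' < cLab H w := by
      unfold cLab; have := Fin.lt_iff_val_lt_val.mp this; omega
    omega

lemma vtx_cover (v : SpiderV 1 ⊕ Σ n, B n) :
    v = Sum.inl none ∨ ∃ w, v = vtx w := by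
  rcases v with (_ | ⟨i, k⟩) | p
  · exact Or.inl rfl
  · refine Or.inr ⟨Sum.inl ⟨i.val, by have := i.isLt; omega⟩, ?_⟩
    show Sum.inl (some (i, k)) = Sum.inl (some (_, 0))
    exact congrArg Sum.inl (pt_eq rfl)
  · exact Or.inr ⟨Sum.inr p, rfl⟩

lemma W_inj : Function.Injective (W H (B := B)) := by
  intro v v' h
  rcases vtx_cover (B := B) v with rfl | ⟨w, rfl⟩ <;>
    rcases vtx_cover (B := B) v' with rfl | ⟨w', rfl⟩
  · rfl
  · exact absurd h.symm (Nat.ne_of_lt (W_v0_gt H w'))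
  · exact absurd h (Nat.ne_of_lt (W_v0_gt H w))
  · exact congrArg vtx (W_inj_aux H h)


def cEdge (w : Fin (3*1) ⊕ Σ n, B n) : Sym2 (SpiderV 1 ⊕ Σ n, B n) := s(Sum.inl none, vtx w)

def aEdge (p : Σ n, B n) : Sym2 (SpiderV 1 ⊕ Σ n, B n) := s(vtx (Sum.inl p.1), Sum.inr p)

def iEdge (n : Fin (3*1)) (d : Sym2 (B n)) : Sym2 (SpiderV 1 ⊕ Σ n, B n) :=
  Sym2.map (fun u => Sum.inr ⟨n, u⟩) d

lemma f_cEdge (w : Fin (3*1) ⊕ Σ n, B n) : f H (cEdge w) = cLab H w := by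
  rcases w with n | ⟨n, u⟩
  · show f H s(Sum.inl none, Sum.inl (some (_, 0))) = _
    rw [f_mk]
    show cLab H (Sum.inl _) = _
    exact congrArg (fun m => cLab H (Sum.inl m)) (Fin.ext rfl)
  · show f H s(Sum.inl none, Sum.inr ⟨n, u⟩) = _
    rw [f_mk]
    rfl

lemma f_aEdge (p : Σ n, B n) : f H (aEdge p) = aLab H p := by
  rcases p with ⟨n, u⟩
  show f H s(Sum.inl (some (⟨n.val, by have := n.isLt; omega⟩, 0)), Sum.inr ⟨n, u⟩) = _
  rw [f_mk]
  rfl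

lemma f_iEdge (n : Fin (3*1)) (d : Sym2 (B n)) : f H (iEdge n d) = iLab H n d := by
  induction d using Sym2.ind with
  | _ u u' =>
    rw [iEdge, Sym2.map_pair_eq, f_mk]
    show (if h : n = n then iLab H n s(u, h ▸ u') else 0) = _
    rw [dif_pos rfl]

lemma cEdge_mem (w : Fin (3*1) ⊕ Σ n, B n) :
    cEdge w ∈ (spiderCorona 1 le_rfl H).edgeSet := by
  rw [cEdge, SimpleGraph.mem_edgeSet]
  rcases w with n | p
  · exact adj_v0_some H _ 0
  · exact adj_v0_inr H p

lemma aEdge_mem (p : Σ n, B n) :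
    aEdge p ∈ (spiderCorona 1 le_rfl H).edgeSet := by
  rcases p with ⟨n, u⟩
  rw [aEdge, SimpleGraph.mem_edgeSet]
  exact (adj_X_inr H _ 0 n u).mpr rfl

lemma iEdge_mem (n : Fin (3*1)) (d : Sym2 (B n)) (hd : d ∈ (H n).edgeSet) :
    iEdge n d ∈ (spiderCorona 1 le_rfl H).edgeSet := by
  induction d using Sym2.ind with
  | _ u u' =>
    rw [iEdge, Sym2.map_pair_eq, SimpleGraph.mem_edgeSet]
    exact (adj_inr_inr H n u u').mpr ((H n).mem_edgeSet.mp hd)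

lemma edge_class {e : Sym2 (SpiderV 1 ⊕ Σ n, B n)}
    (he : e ∈ (spiderCorona 1 le_rfl H).edgeSet) :
    (∃ w, e = cEdge w) ∨ (∃ p, e = aEdge (B := B) p) ∨
      (∃ n d, d ∈ (H n).edgeSet ∧ e = iEdge n d) := by
  induction e using Sym2.ind with
  | _ x y =>
    rw [SimpleGraph.mem_edgeSet] at he
    rcases x with (_ | ⟨i, k⟩) | ⟨n, u⟩ <;> rcases y with (_ | ⟨j, k'⟩) | ⟨m, v⟩
    · exact absurd rfl he.ne
    · refine Or.inl ⟨Sum.inl ⟨j.val, by have := j.isLt; omega⟩, ?_⟩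
      exact congrArg (fun z => s(Sum.inl none, z)) (congrArg Sum.inl (pt_eq rfl))
    · exact Or.inl ⟨Sum.inr ⟨m, v⟩, rfl⟩
    · refine Or.inl ⟨Sum.inl ⟨i.val, by have := i.isLt; omega⟩, ?_⟩
      rw [Sym2.eq_swap]
      exact congrArg (fun z => s(Sum.inl none, z)) (congrArg Sum.inl (pt_eq rfl))
    · exact absurd he (not_adj_X_X H _ _)
    · have hv : (i : ℕ) = (m : ℕ) := (adj_X_inr H i k m v).mp he
      refine Or.inr (Or.inl ⟨⟨m, v⟩, ?_⟩)
      show _ = s(vtx (Sum.inl m), (Sum.inr ⟨m, v⟩ : SpiderV 1 ⊕ Σ n, B n))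
      exact congrArg (fun z : SpiderV 1 ⊕ Σ n, B n => s(z, (Sum.inr ⟨m, v⟩ : SpiderV 1 ⊕ Σ n, B n)))
        (congrArg Sum.inl (pt_eq hv))
    · refine Or.inl ⟨Sum.inr ⟨n, u⟩, ?_⟩
      rw [Sym2.eq_swap]
      rfl
    · have hv : (j : ℕ) = (n : ℕ) := (adj_X_inr H j k' n u).mp he.symm
      refine Or.inr (Or.inl ⟨⟨n, u⟩, ?_⟩)
      rw [Sym2.eq_swap]
      show _ = s(vtx (Sum.inl n), (Sum.inr ⟨n, u⟩ : SpiderV 1 ⊕ Σ n, B n))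
      exact congrArg (fun z : SpiderV 1 ⊕ Σ n, B n => s(z, (Sum.inr ⟨n, u⟩ : SpiderV 1 ⊕ Σ n, B n)))
        (congrArg Sum.inl (pt_eq hv))
    · rcases eq_or_ne n m with rfl | hne
      · have hadj : (H n).Adj u v := (adj_inr_inr H n u v).mp he
        refine Or.inr (Or.inr ⟨n, s(u, v), (H n).mem_edgeSet.mpr hadj, ?_⟩)
        rw [iEdge, Sym2.map_pair_eq]
      · exact absurd he (not_adj_inr_inr H hne u v)

lemma f_bijOn : Set.BijOn (f H) (spiderCorona 1 le_rfl H).edgeSet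
    (Set.Icc 1 (M H + P B + Q B)) := by
  refine ⟨?_, ?_, ?_⟩
  · intro e he
    rw [Set.mem_Icc]
    rcases edge_class H he with ⟨w, rfl⟩ | ⟨p, rfl⟩ | ⟨n, d, hd, rfl⟩
    · rw [f_cEdge]; have := cLab_bounds H w; omega
    · rw [f_aEdge]; have := aLab_bounds H p; have := Q_pos (B := B); omega
    · rw [f_iEdge]; have := iLab_bounds H n d hd; have := Q_pos (B := B); omega
  · intro e he e' he' hf
    rcases edge_class H he with ⟨w, rfl⟩ | ⟨p, rfl⟩ | ⟨n, d, hd, rfl⟩ <;>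
      rcases edge_class H he' with ⟨w', rfl⟩ | ⟨p', rfl⟩ | ⟨n', d', hd', rfl⟩
    · rw [f_cEdge, f_cEdge] at hf
      have : rank H w = rank H w' := by unfold cLab at hf; exact Fin.ext (by omega)
      rw [rank_inj H this]
    · rw [f_cEdge, f_aEdge] at hf
      have h1 := cLab_bounds H w; have h2 := aLab_bounds H p'; omega
    · rw [f_cEdge, f_iEdge] at hf
      have h1 := cLab_bounds H w; have h2 := iLab_bounds H n' d' hd'; omega
    · rw [f_aEdge, f_cEdge] at hf
      have h1 := cLab_bounds H w'; have h2 := aLab_bounds H p; omega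
    · rw [f_aEdge, f_aEdge] at hf
      have : eIV p = eIV p' := by unfold aLab at hf; exact Fin.ext (by omega)
      rw [(eIV (B := B)).injective this]
    · rw [f_aEdge, f_iEdge] at hf
      have h1 := aLab_bounds H p; have h2 := iLab_bounds H n' d' hd'; omega
    · rw [f_iEdge, f_cEdge] at hf
      have h1 := cLab_bounds H w'; have h2 := iLab_bounds H n d hd; omega
    · rw [f_iEdge, f_aEdge] at hf
      have h1 := aLab_bounds H p'; have h2 := iLab_bounds H n d hd; omega
    · rw [f_iEdge, f_iEdge, iLab, dif_pos hd, iLab, dif_pos hd'] at hf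
      have hs : (⟨n, ⟨d, hd⟩⟩ : Σ n, ↥(H n).edgeSet) = ⟨n', ⟨d', hd'⟩⟩ :=
        (eIE H).injective (Fin.ext (by omega))
      obtain ⟨rfl, h2⟩ := Sigma.mk.inj_iff.mp hs
      have hd2 : d = d' := congrArg Subtype.val (eq_of_heq h2)
      rw [hd2]
  · intro j hj
    rw [Set.mem_Icc] at hj
    by_cases hA : j ≤ M H
    · set x := (eIE H).symm ⟨j - 1, by omega⟩ with hx
      refine ⟨iEdge x.1 x.2.val, iEdge_mem H x.1 x.2.val x.2.2, ?_⟩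
      rw [f_iEdge, iLab, dif_pos x.2.2]
      have : eIE H ⟨x.1, ⟨x.2.val, x.2.2⟩⟩ = ⟨j - 1, by omega⟩ := by
        show eIE H x = _
        rw [hx, Equiv.apply_symm_apply]
      rw [this]
      show 1 + (j - 1) = j
      omega
    · by_cases hB : j ≤ M H + P B
      · set p := (eIV (B := B)).symm ⟨j - M H - 1, by omega⟩ with hp
        refine ⟨aEdge p, aEdge_mem H p, ?_⟩
        rw [f_aEdge, aLab, hp, Equiv.apply_symm_apply]
        show M H + 1 + (j - M H - 1) = j
        omega
      · obtain ⟨w, hw⟩ := rank_surj H (⟨j - M H - P B - 1, by omega⟩ : Fin (Q B))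
        refine ⟨cEdge w, cEdge_mem H w, ?_⟩
        rw [f_cEdge, cLab, hw]
        show M H + P B + 1 + (j - M H - P B - 1) = j
        omega

lemma card_edgeSet :
    Nat.card (spiderCorona 1 le_rfl H).edgeSet = M H + P B + Q B := by
  rw [Nat.card_congr (Set.BijOn.equiv _ (f_bijOn H)), ← Finset.coe_Icc,
    Nat.card_coe_set_eq, Set.ncard_coe_finset, Nat.card_Icc]
  omega

lemma antimagic : IsAntimagic (spiderCorona 1 le_rfl H) := by
  unfold IsAntimagic
  refine ⟨f H, ?_, ?_⟩
  · rw [card_edgeSet H]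
    exact f_bijOn H
  · exact W_inj H

end K13

/-- The generalized edge corona `K_{1,3} ⋄ (H₁, H₂, H₃)` of the star `K_{1,3}`
(center `v₀ = none`, leaves the first vertices of the three legs for `p = 1`)
with connected graphs `H₁, H₂, H₃`, each on at least two vertices,
is antimagic, with no further conditions. -/
theorem K13_corona_antimagic
    (B : Fin (3 * 1) → Type*) [∀ n, Fintype (B n)]
    (H : ∀ n, SimpleGraph (B n))
    (hconn : ∀ n, (H n).Connected)
    (hcard : ∀ n, 2 ≤ Fintype.card (B n)) :
    IsAntimagic (spiderCorona 1 le_rfl H) := by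
  exact K13.antimagic H
end
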